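/- (Uniqueness of pseudo-spherical spacelike framed curves.) Let (γ,v₁,v₂) and (γ̃,ṽ₁,ṽ₂) be pseudo-spherical spacelike framed curves on I with the same sign ε = ⟨v₁,v₁⟩ = ⟨ṽ₁,ṽ₁⟩, and suppose their curvatures coincide: (α,ℓ,m,n) = (α̃,ℓ̃,m̃,ñ) as functions on I. Then the two framed curves are congruent: there exists a linear map A : ℝ⁴ → ℝ⁴ preserving the pseudo-scalar product (⟨Au,Aw⟩ = ⟨u,w⟩ for all u,w ∈ ℝ⁴) such that γ̃(s) = A(γ(s)), ṽ₁(s) = A(v₁(s)), and ṽ₂(s) = A(v₂(s)) for all s ∈ I. -/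

import Mathlib

noncomputable section

/-- ℝ⁴ as `Fin 4 → ℝ`, carrying the pseudo-scalar product of index 2. -/
abbrev R4 : Type := Fin 4 → ℝ

/-- ℝ³ as `Fin 3 → ℝ`. -/
abbrev R3 : Type := Fin 3 → ℝ

/-- The pseudo-scalar product ⟨u,w⟩ = −u₁w₁ − u₂w₂ + u₃w₃ + u₄w₄ of ℝ⁴₂. -/
def pip (u w : R4) : ℝ :=
  -(u 0 * w 0) - u 1 * w 1 + u 2 * w 2 + u 3 * w 3

/-- The anti-de Sitter 3-space AdS³ = {u : ⟨u,u⟩ = −1}. -/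
def AdS3 : Set R4 := {u | pip u u = -1}

/-- The 3×3 minor of the rows u,v,w using columns a,b,c. -/
def minor3 (u v w : R4) (a b c : Fin 4) : ℝ :=
  u a * (v b * w c - v c * w b) - u b * (v a * w c - v c * w a)
    + u c * (v a * w b - v b * w a)

/-- The triple product u×v×w in ℝ⁴₂, the formal determinant with first row
(−e₁,−e₂,e₃,e₄). -/
def trip (u v w : R4) : R4 :=
  ![-(minor3 u v w 1 2 3), minor3 u v w 0 2 3, minor3 u v w 0 1 3,
    -(minor3 u v w 0 1 2)]

/-- A pseudo-spherical spacelike framed curve on `I` with sign `ε`. -/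
structure IsFramedCurve (I : Set ℝ) (γ v₁ v₂ : ℝ → R4) (ε : ℝ) : Prop where
  eps : ε = 1 ∨ ε = -1
  smooth_γ : ContDiffOn ℝ (⊤ : ℕ∞) γ I
  smooth_v₁ : ContDiffOn ℝ (⊤ : ℕ∞) v₁ I
  smooth_v₂ : ContDiffOn ℝ (⊤ : ℕ∞) v₂ I
  mem_ads : ∀ s ∈ I, γ s ∈ AdS3
  norm_v₁ : ∀ s ∈ I, pip (v₁ s) (v₁ s) = ε
  norm_v₂ : ∀ s ∈ I, pip (v₂ s) (v₂ s) = -ε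
  orth_v₁v₂ : ∀ s ∈ I, pip (v₁ s) (v₂ s) = 0
  orth_γv₁ : ∀ s ∈ I, pip (γ s) (v₁ s) = 0
  orth_γv₂ : ∀ s ∈ I, pip (γ s) (v₂ s) = 0
  tang_v₁ : ∀ s ∈ I, pip (deriv γ s) (v₁ s) = 0
  tang_v₂ : ∀ s ∈ I, pip (deriv γ s) (v₂ s) = 0

/-- μ(s) = γ(s)×v₁(s)×v₂(s). -/
def muF (γ v₁ v₂ : ℝ → R4) (s : ℝ) : R4 := trip (γ s) (v₁ s) (v₂ s)

/-- α(s) = ⟨γ′(s), μ(s)⟩. -/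
def curvA (γ v₁ v₂ : ℝ → R4) (s : ℝ) : ℝ := pip (deriv γ s) (muF γ v₁ v₂ s)

/-- ℓ(s) = −ε⟨v₁′(s), v₂(s)⟩. -/
def curvL (ε : ℝ) (v₁ v₂ : ℝ → R4) (s : ℝ) : ℝ := -ε * pip (deriv v₁ s) (v₂ s)

/-- m(s) = ⟨v₁′(s), μ(s)⟩. -/
def curvM (γ v₁ v₂ : ℝ → R4) (s : ℝ) : ℝ := pip (deriv v₁ s) (muF γ v₁ v₂ s)

/-- n(s) = ⟨v₂′(s), μ(s)⟩. -/
def curvN (γ v₁ v₂ : ℝ → R4) (s : ℝ) : ℝ := pip (deriv v₂ s) (muF γ v₁ v₂ s)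

/-- The nullcone front NF±(s,λ) = γ(s) + λ(v₁(s) ± v₂(s)), with sign `e = ±1`. -/
def NF (γ v₁ v₂ : ℝ → R4) (e : ℝ) (q : ℝ × ℝ) : R4 :=
  γ q.1 + q.2 • (v₁ q.1 + e • v₂ q.1)

/-- The function σ± of Theorem 4.3, with sign `e = ±1`. -/
def sigmaF (γ v₁ v₂ : ℝ → R4) (ε e : ℝ) (s : ℝ) : ℝ :=
  curvA γ v₁ v₂ s *
      (-(deriv (curvM γ v₁ v₂) s + e * deriv (curvN γ v₁ v₂) s)
        + curvL ε v₁ v₂ s * (curvN γ v₁ v₂ s + e * curvM γ v₁ v₂ s))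
    + deriv (curvA γ v₁ v₂) s * (curvM γ v₁ v₂ s + e * curvN γ v₁ v₂ s)

/-- A point is a singular point of `f : ℝ×ℝ → ℝ⁴₂` when the two partial
derivatives are linearly dependent (the differential has rank < 2). -/
def SingularAt (f : ℝ × ℝ → R4) (q : ℝ × ℝ) : Prop :=
  ¬ LinearIndependent ℝ
      ![deriv (fun t => f (t, q.2)) q.1, deriv (fun l => f (q.1, l)) q.2]

/-- The cuspidal edge model CE(u,v) = (u², u³, v). -/
def CE : ℝ × ℝ → R3 := fun q => ![q.1 ^ 2, q.1 ^ 3, q.2]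

/-- The swallowtail model SW(u,v) = (3u⁴+u²v, 4u³+2uv, v). -/
def SW : ℝ × ℝ → R3 :=
  fun q => ![3 * q.1 ^ 4 + q.1 ^ 2 * q.2, 4 * q.1 ^ 3 + 2 * q.1 * q.2, q.2]

/-- `f` (a map into AdS³) is locally diffeomorphic at `p` to the model `g` at `0`:
there are a smooth diffeomorphism `φ` from a neighborhood `U` of `0` in ℝ² onto a
neighborhood `V` of `p` with `φ 0 = p`, and a smooth diffeomorphism `Ψ` from a
neighborhood `W` of `f p` in the submanifold AdS³ onto an open set `W'` of ℝ³
with `Ψ (f p) = g 0`, such that `Ψ ∘ f ∘ φ = g` near `0`. -/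
def LocallyDiffeoAt (f : ℝ × ℝ → R4) (p : ℝ × ℝ) (g : ℝ × ℝ → R3) : Prop :=
  ∃ (U V : Set (ℝ × ℝ)) (φ φinv : ℝ × ℝ → ℝ × ℝ)
    (W : Set R4) (W' : Set R3) (Ψ : R4 → R3) (Ψinv : R3 → R4),
    IsOpen U ∧ (0 : ℝ × ℝ) ∈ U ∧ IsOpen V ∧ p ∈ V ∧
    ContDiffOn ℝ (⊤ : ℕ∞) φ U ∧ Set.BijOn φ U V ∧ φ 0 = p ∧
    ContDiffOn ℝ (⊤ : ℕ∞) φinv V ∧ (∀ x ∈ U, φinv (φ x) = x) ∧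
    (∃ O : Set R4, IsOpen O ∧ W = O ∩ AdS3) ∧ f p ∈ W ∧ IsOpen W' ∧
    ContDiffOn ℝ (⊤ : ℕ∞) Ψ W ∧ Set.BijOn Ψ W W' ∧ Ψ (f p) = g 0 ∧
    ContDiffOn ℝ (⊤ : ℕ∞) Ψinv W' ∧ (∀ y ∈ W, Ψinv (Ψ y) = y) ∧
    (∀ x ∈ U, f (φ x) ∈ W) ∧ (∀ x ∈ U, Ψ (f (φ x)) = g x)

/-- The anti-de Sitter distance-squared function d_{v₀}(s) = ⟨γ(s)−v₀, γ(s)−v₀⟩. -/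
def dSq (γ : ℝ → R4) (v₀ : R4) (s : ℝ) : ℝ := pip (γ s - v₀) (γ s - v₀)


/-! ### Auxiliary lemmas for the uniqueness theorem -/

section UniqAux

lemma pip_comm (u w : R4) : pip u w = pip w u := by unfold pip; ring

lemma pip_comb_left (a b c d : ℝ) (x0 x1 x2 x3 w : R4) :
    pip (a • x0 + b • x1 + c • x2 + d • x3) w
      = a * pip x0 w + b * pip x1 w + c * pip x2 w + d * pip x3 w := by
  simp only [pip, Pi.add_apply, Pi.smul_apply, smul_eq_mul]; ring

lemma pip_comb_right (a b c d : ℝ) (x0 x1 x2 x3 w : R4) :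
    pip w (a • x0 + b • x1 + c • x2 + d • x3)
      = a * pip w x0 + b * pip w x1 + c * pip w x2 + d * pip w x3 := by
  simp only [pip, Pi.add_apply, Pi.smul_apply, smul_eq_mul]; ring

lemma pip_fst_trip (u v w : R4) : pip u (trip u v w) = 0 := by
  simp [pip, trip, minor3]; ring

lemma pip_snd_trip (u v w : R4) : pip v (trip u v w) = 0 := by
  simp [pip, trip, minor3]; ring

lemma pip_thd_trip (u v w : R4) : pip w (trip u v w) = 0 := by
  simp [pip, trip, minor3]; ring

lemma pip_trip_trip (u v w : R4) : pip (trip u v w) (trip u v w) =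
    pip u u * (pip v v * pip w w - pip v w * pip v w)
      - pip u v * (pip u v * pip w w - pip v w * pip u w)
      + pip u w * (pip u v * pip v w - pip v v * pip u w) := by
  simp [pip, trip, minor3]; ring

lemma hasDerivAt_pip {f g : ℝ → R4} {f' g' : R4} {s : ℝ}
    (hf : HasDerivAt f f' s) (hg : HasDerivAt g g' s) :
    HasDerivAt (fun t => pip (f t) (g t)) (pip f' (g s) + pip (f s) g') s := by
  have h0 := hasDerivAt_pi.1 hf
  have k0 := hasDerivAt_pi.1 hg
  unfold pip
  convert (((((h0 0).mul (k0 0)).neg.sub ((h0 1).mul (k0 1))).add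
    ((h0 2).mul (k0 2))).add ((h0 3).mul (k0 3))) using 1
  · rfl
  · rfl
  · rfl
  · ring

lemma frame_expansion {ε : ℝ} (hε : ε = 1 ∨ ε = -1) {x0 x1 x2 x3 : R4}
    (h00 : pip x0 x0 = -1) (h01 : pip x0 x1 = 0) (h02 : pip x0 x2 = 0) (h03 : pip x0 x3 = 0)
    (h11 : pip x1 x1 = ε) (h12 : pip x1 x2 = 0) (h13 : pip x1 x3 = 0)
    (h22 : pip x2 x2 = -ε) (h23 : pip x2 x3 = 0) (h33 : pip x3 x3 = 1) (w : R4) :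
    w = (-(pip w x0)) • x0 + (ε * pip w x1) • x1 + (-(ε * pip w x2)) • x2 + (pip w x3) • x3 := by
  have hε2 : ε * ε = 1 := by rcases hε with rfl | rfl <;> norm_num
  have h10 : pip x1 x0 = 0 := by rw [pip_comm]; exact h01
  have h20 : pip x2 x0 = 0 := by rw [pip_comm]; exact h02
  have h30 : pip x3 x0 = 0 := by rw [pip_comm]; exact h03
  have h21 : pip x2 x1 = 0 := by rw [pip_comm]; exact h12
  have h31 : pip x3 x1 = 0 := by rw [pip_comm]; exact h13
  have h32 : pip x3 x2 = 0 := by rw [pip_comm]; exact h23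
  set X : Fin 4 → R4 := ![x0, x1, x2, x3] with hX
  set D : Fin 4 → ℝ := ![(-1 : ℝ), ε, -ε, 1] with hD
  set G : Matrix (Fin 4) (Fin 4) ℝ := Matrix.of fun i a => X i a with hG
  set B : Matrix (Fin 4) (Fin 4) ℝ :=
    Matrix.of fun a i => (![(-1 : ℝ), -1, 1, 1] a) * X i a * D i with hB
  have entry : ∀ i j, (G * B) i j = D j * pip (X i) (X j) := by
    intro i j
    simp [hG, hB, Matrix.mul_apply, Fin.sum_univ_four, pip]
    ring
  have gram : ∀ i j, pip (X i) (X j) = if i = j then D i else 0 := by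
    intro i j
    fin_cases i <;> fin_cases j <;>
      simp [hX, hD, h00, h01, h02, h03, h10, h11, h12, h13, h20, h21, h22, h23, h30, h31,
        h32, h33]
  have hGB : G * B = 1 := by
    ext i j
    rw [entry i j, gram i j]
    fin_cases i <;> fin_cases j <;> simp [hD, Matrix.one_apply] <;> linear_combination hε2
  have hBG := mul_eq_one_comm.mp hGB
  have key : (B * G).transpose.mulVec w = w := by
    rw [hBG]; simp
  funext b
  have kb := congrFun key b
  simp [Matrix.mulVec, Matrix.transpose_apply, dotProduct, Matrix.mul_apply,
    Fin.sum_univ_four, hB, hG, hX, hD] at kb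
  simp only [pip, Pi.add_apply, Pi.smul_apply, smul_eq_mul]
  linear_combination (-1 : ℝ) * kb

lemma exists_isometry {ε : ℝ} (hε : ε = 1 ∨ ε = -1) {x0 x1 x2 x3 y0 y1 y2 y3 : R4}
    (h00 : pip x0 x0 = -1) (h01 : pip x0 x1 = 0) (h02 : pip x0 x2 = 0) (h03 : pip x0 x3 = 0)
    (h11 : pip x1 x1 = ε) (h12 : pip x1 x2 = 0) (h13 : pip x1 x3 = 0)
    (h22 : pip x2 x2 = -ε) (h23 : pip x2 x3 = 0) (h33 : pip x3 x3 = 1)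
    (g00 : pip y0 y0 = -1) (g01 : pip y0 y1 = 0) (g02 : pip y0 y2 = 0) (g03 : pip y0 y3 = 0)
    (g11 : pip y1 y1 = ε) (g12 : pip y1 y2 = 0) (g13 : pip y1 y3 = 0)
    (g22 : pip y2 y2 = -ε) (g23 : pip y2 y3 = 0) (g33 : pip y3 y3 = 1) :
    ∃ A : R4 →ₗ[ℝ] R4, (∀ u w : R4, pip (A u) (A w) = pip u w) ∧
      A x0 = y0 ∧ A x1 = y1 ∧ A x2 = y2 ∧ A x3 = y3 := by
  have hε2 : ε * ε = 1 := by rcases hε with rfl | rfl <;> norm_num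
  refine ⟨LinearMap.mk (AddHom.mk (fun u =>
      (-(pip u x0)) • y0 + (ε * pip u x1) • y1 + (-(ε * pip u x2)) • y2 + (pip u x3) • y3)
      (fun u v => by funext k; simp only [pip, Pi.add_apply, Pi.smul_apply, smul_eq_mul]; ring))
      (fun c u => by funext k; simp only [pip, Pi.add_apply, Pi.smul_apply, smul_eq_mul, RingHom.id_apply]; ring),
    ?_, ?_, ?_, ?_, ?_⟩
  · intro u w
    show pip ((-(pip u x0)) • y0 + (ε * pip u x1) • y1 + (-(ε * pip u x2)) • y2 + (pip u x3) • y3)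
        ((-(pip w x0)) • y0 + (ε * pip w x1) • y1 + (-(ε * pip w x2)) • y2 + (pip w x3) • y3) = pip u w
    rw [pip_comb_left, pip_comb_right, pip_comb_right, pip_comb_right, pip_comb_right]
    rw [g00, g01, g02, g03, g11, g12, g13, g22, g23, g33,
      pip_comm y1 y0, pip_comm y2 y0, pip_comm y3 y0, pip_comm y2 y1, pip_comm y3 y1,
      pip_comm y3 y2, g01, g02, g03, g12, g13, g23]
    conv_rhs => rw [frame_expansion hε h00 h01 h02 h03 h11 h12 h13 h22 h23 h33 u]
    rw [pip_comb_left]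
    rw [pip_comm x0 w, pip_comm x1 w, pip_comm x2 w, pip_comm x3 w] at *
    rcases hε with rfl | rfl <;> ring
  · show (-(pip x0 x0)) • y0 + (ε * pip x0 x1) • y1 + (-(ε * pip x0 x2)) • y2 + (pip x0 x3) • y3 = y0
    rw [h00, h01, h02, h03]; simp
  · show (-(pip x1 x0)) • y0 + (ε * pip x1 x1) • y1 + (-(ε * pip x1 x2)) • y2 + (pip x1 x3) • y3 = y1
    rw [pip_comm x1 x0, h01, h11, h12, h13, hε2]; simp
  · show (-(pip x2 x0)) • y0 + (ε * pip x2 x1) • y1 + (-(ε * pip x2 x2)) • y2 + (pip x2 x3) • y3 = y2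
    rw [pip_comm x2 x0, h02, pip_comm x2 x1, h12, h22, h23]
    have hne : -(ε * -ε) = (1 : ℝ) := by rw [← hε2]; ring
    rw [hne]; simp
  · show (-(pip x3 x0)) • y0 + (ε * pip x3 x1) • y1 + (-(ε * pip x3 x2)) • y2 + (pip x3 x3) • y3 = y3
    rw [pip_comm x3 x0, h03, pip_comm x3 x1, h13, pip_comm x3 x2, h23, h33]; simp

lemma gram_muF {I : Set ℝ} {γ v₁ v₂ : ℝ → R4} {ε : ℝ}
    (h : IsFramedCurve I γ v₁ v₂ ε) {s : ℝ} (hs : s ∈ I) :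
    pip (γ s) (muF γ v₁ v₂ s) = 0 ∧ pip (v₁ s) (muF γ v₁ v₂ s) = 0 ∧
    pip (v₂ s) (muF γ v₁ v₂ s) = 0 ∧ pip (muF γ v₁ v₂ s) (muF γ v₁ v₂ s) = 1 := by
  have hε2 : ε * ε = 1 := by rcases h.eps with rfl | rfl <;> norm_num
  have h00 : pip (γ s) (γ s) = -1 := h.mem_ads s hs
  refine ⟨pip_fst_trip _ _ _, pip_snd_trip _ _ _, pip_thd_trip _ _ _, ?_⟩
  show pip (trip (γ s) (v₁ s) (v₂ s)) (trip (γ s) (v₁ s) (v₂ s)) = 1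
  rw [pip_trip_trip, h00, h.orth_γv₁ s hs, h.orth_γv₂ s hs, h.norm_v₁ s hs,
    h.orth_v₁v₂ s hs, h.norm_v₂ s hs]
  linear_combination hε2

lemma frenet {I : Set ℝ} (hIopen : IsOpen I) {γ v₁ v₂ : ℝ → R4} {ε : ℝ}
    (h : IsFramedCurve I γ v₁ v₂ ε) {s : ℝ} (hs : s ∈ I) :
    HasDerivAt γ (curvA γ v₁ v₂ s • muF γ v₁ v₂ s) s ∧
    HasDerivAt v₁ (curvL ε v₁ v₂ s • v₂ s + curvM γ v₁ v₂ s • muF γ v₁ v₂ s) s ∧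
    HasDerivAt v₂ (curvL ε v₁ v₂ s • v₁ s + curvN γ v₁ v₂ s • muF γ v₁ v₂ s) s ∧
    HasDerivAt (muF γ v₁ v₂)
      (curvA γ v₁ v₂ s • γ s + (-(ε * curvM γ v₁ v₂ s)) • v₁ s
        + (ε * curvN γ v₁ v₂ s) • v₂ s) s := by
  have heps := h.eps
  have hε2 : ε * ε = 1 := by rcases heps with rfl | rfl <;> norm_num
  have hdiff : ∀ f : ℝ → R4, ContDiffOn ℝ (⊤ : ℕ∞) f I → DifferentiableAt ℝ f s := fun f hf =>
    (hf.differentiableOn (by simp)).differentiableAt (hIopen.mem_nhds hs)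
  have hγ : DifferentiableAt ℝ γ s := hdiff γ h.smooth_γ
  have hv1 : DifferentiableAt ℝ v₁ s := hdiff v₁ h.smooth_v₁
  have hv2 : DifferentiableAt ℝ v₂ s := hdiff v₂ h.smooth_v₂
  have hμ : DifferentiableAt ℝ (muF γ v₁ v₂) s := by
    apply differentiableAt_pi.mpr
    intro i
    fin_cases i <;> simp [muF, trip, minor3] <;> fun_prop
  have hγd := hγ.hasDerivAt
  have hv1d := hv1.hasDerivAt
  have hv2d := hv2.hasDerivAt
  have hμd := hμ.hasDerivAt
  have pair : ∀ (f g : ℝ → R4), HasDerivAt f (deriv f s) s → HasDerivAt g (deriv g s) s →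
      ∀ c : ℝ, (∀ t ∈ I, pip (f t) (g t) = c) →
      pip (deriv f s) (g s) + pip (f s) (deriv g s) = 0 := by
    intro f g hf hg c hc
    have h1 := hasDerivAt_pip hf hg
    have h2 : (fun t => pip (f t) (g t)) =ᶠ[nhds s] fun _ => c :=
      Filter.eventuallyEq_of_mem (hIopen.mem_nhds hs) hc
    have h3 : HasDerivAt (fun t => pip (f t) (g t)) 0 s :=
      (hasDerivAt_const s c).congr_of_eventuallyEq h2
    exact h1.unique h3
  have h00 : pip (γ s) (γ s) = -1 := h.mem_ads s hs
  have h01 : pip (γ s) (v₁ s) = 0 := h.orth_γv₁ s hs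
  have h02 : pip (γ s) (v₂ s) = 0 := h.orth_γv₂ s hs
  obtain ⟨h03, h13, h23, h33⟩ := gram_muF h hs
  have h11 : pip (v₁ s) (v₁ s) = ε := h.norm_v₁ s hs
  have h12 : pip (v₁ s) (v₂ s) = 0 := h.orth_v₁v₂ s hs
  have h22 : pip (v₂ s) (v₂ s) = -ε := h.norm_v₂ s hs
  -- derivative of the pairings
  have qγγ : pip (deriv γ s) (γ s) = 0 := by
    have hp := pair γ γ hγd hγd (-1) (fun t ht => h.mem_ads t ht)
    rw [pip_comm (γ s) (deriv γ s)] at hp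
    linarith
  have qγ1 : pip (deriv γ s) (v₁ s) = 0 := h.tang_v₁ s hs
  have qγ2 : pip (deriv γ s) (v₂ s) = 0 := h.tang_v₂ s hs
  -- γ'
  have hexpγ := frame_expansion heps h00 h01 h02 h03 h11 h12 h13 h22 h23 h33 (deriv γ s)
  rw [qγγ, qγ1, qγ2] at hexpγ
  simp only [neg_zero, mul_zero, zero_smul, zero_add] at hexpγ
  have Hγ : HasDerivAt γ (curvA γ v₁ v₂ s • muF γ v₁ v₂ s) s := by
    show HasDerivAt γ (pip (deriv γ s) (muF γ v₁ v₂ s) • muF γ v₁ v₂ s) s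
    rw [← hexpγ]; exact hγd
  -- v₁'
  have qv1γ : pip (deriv v₁ s) (γ s) = 0 := by
    have hp := pair v₁ γ hv1d hγd 0 (fun t ht => by rw [pip_comm]; exact h.orth_γv₁ t ht)
    rw [pip_comm (v₁ s) (deriv γ s), qγ1] at hp
    linarith
  have qv11 : pip (deriv v₁ s) (v₁ s) = 0 := by
    have hp := pair v₁ v₁ hv1d hv1d ε (fun t ht => h.norm_v₁ t ht)
    rw [pip_comm (v₁ s) (deriv v₁ s)] at hp
    linarith
  have hexpv1 := frame_expansion heps h00 h01 h02 h03 h11 h12 h13 h22 h23 h33 (deriv v₁ s)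
  rw [qv1γ, qv11] at hexpv1
  rw [show -(ε * pip (deriv v₁ s) (v₂ s)) = curvL ε v₁ v₂ s from by unfold curvL; ring] at hexpv1
  simp only [neg_zero, mul_zero, zero_smul, zero_add] at hexpv1
  have Hv1 : HasDerivAt v₁ (curvL ε v₁ v₂ s • v₂ s + curvM γ v₁ v₂ s • muF γ v₁ v₂ s) s := by
    show HasDerivAt v₁ (curvL ε v₁ v₂ s • v₂ s
      + pip (deriv v₁ s) (muF γ v₁ v₂ s) • muF γ v₁ v₂ s) s
    rw [← hexpv1]; exact hv1d
  -- v₂'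
  have qv2γ : pip (deriv v₂ s) (γ s) = 0 := by
    have hp := pair v₂ γ hv2d hγd 0 (fun t ht => by rw [pip_comm]; exact h.orth_γv₂ t ht)
    rw [pip_comm (v₂ s) (deriv γ s), qγ2] at hp
    linarith
  have qv22 : pip (deriv v₂ s) (v₂ s) = 0 := by
    have hp := pair v₂ v₂ hv2d hv2d (-ε) (fun t ht => h.norm_v₂ t ht)
    rw [pip_comm (v₂ s) (deriv v₂ s)] at hp
    linarith
  have rel12 : pip (deriv v₁ s) (v₂ s) + pip (deriv v₂ s) (v₁ s) = 0 := by
    have hp := pair v₁ v₂ hv1d hv2d 0 (fun t ht => h.orth_v₁v₂ t ht)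
    rw [pip_comm (v₁ s) (deriv v₂ s)] at hp
    exact hp
  have hexpv2 := frame_expansion heps h00 h01 h02 h03 h11 h12 h13 h22 h23 h33 (deriv v₂ s)
  rw [qv2γ, qv22] at hexpv2
  rw [show ε * pip (deriv v₂ s) (v₁ s) = curvL ε v₁ v₂ s from by
    unfold curvL; linear_combination ε * rel12] at hexpv2
  simp only [neg_zero, mul_zero, zero_smul, zero_add, add_zero] at hexpv2
  have Hv2 : HasDerivAt v₂ (curvL ε v₁ v₂ s • v₁ s + curvN γ v₁ v₂ s • muF γ v₁ v₂ s) s := by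
    show HasDerivAt v₂ (curvL ε v₁ v₂ s • v₁ s
      + pip (deriv v₂ s) (muF γ v₁ v₂ s) • muF γ v₁ v₂ s) s
    rw [← hexpv2]; exact hv2d
  -- μ'
  have relμγ : pip (deriv (muF γ v₁ v₂) s) (γ s) + pip (deriv γ s) (muF γ v₁ v₂ s) = 0 := by
    have hp := pair (muF γ v₁ v₂) γ hμd hγd 0 (fun t ht => pip_comm _ _ ▸ pip_fst_trip (γ t) (v₁ t) (v₂ t))
    rw [pip_comm (muF γ v₁ v₂ s) (deriv γ s)] at hp
    exact hp
  have relμ1 : pip (deriv v₁ s) (muF γ v₁ v₂ s) + pip (v₁ s) (deriv (muF γ v₁ v₂) s) = 0 :=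
    pair v₁ (muF γ v₁ v₂) hv1d hμd 0 (fun t ht => pip_snd_trip (γ t) (v₁ t) (v₂ t))
  have relμ2 : pip (deriv v₂ s) (muF γ v₁ v₂ s) + pip (v₂ s) (deriv (muF γ v₁ v₂) s) = 0 :=
    pair v₂ (muF γ v₁ v₂) hv2d hμd 0 (fun t ht => pip_thd_trip (γ t) (v₁ t) (v₂ t))
  have qμμ : pip (deriv (muF γ v₁ v₂) s) (muF γ v₁ v₂ s) = 0 := by
    have hp := pair (muF γ v₁ v₂) (muF γ v₁ v₂) hμd hμd 1
      (fun t ht => (gram_muF h ht).2.2.2)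
    rw [pip_comm (muF γ v₁ v₂ s) (deriv (muF γ v₁ v₂) s)] at hp
    linarith
  have hexpμ := frame_expansion heps h00 h01 h02 h03 h11 h12 h13 h22 h23 h33
    (deriv (muF γ v₁ v₂) s)
  rw [qμμ] at hexpμ
  rw [show -(pip (deriv (muF γ v₁ v₂) s) (γ s)) = curvA γ v₁ v₂ s from by
    unfold curvA; linear_combination -relμγ] at hexpμ
  rw [show ε * pip (deriv (muF γ v₁ v₂) s) (v₁ s) = -(ε * curvM γ v₁ v₂ s) from by
    unfold curvM
    rw [pip_comm (deriv (muF γ v₁ v₂) s) (v₁ s)]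
    linear_combination ε * relμ1] at hexpμ
  rw [show -(ε * pip (deriv (muF γ v₁ v₂) s) (v₂ s)) = ε * curvN γ v₁ v₂ s from by
    unfold curvN
    rw [pip_comm (deriv (muF γ v₁ v₂) s) (v₂ s)]
    linear_combination (-ε) * relμ2] at hexpμ
  simp only [zero_smul, add_zero] at hexpμ
  have Hμ : HasDerivAt (muF γ v₁ v₂)
      (curvA γ v₁ v₂ s • γ s + (-(ε * curvM γ v₁ v₂ s)) • v₁ s
        + (ε * curvN γ v₁ v₂ s) • v₂ s) s := by
    rw [← hexpμ]; exact hμd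
  exact ⟨Hγ, Hv1, Hv2, Hμ⟩

/-- The right-hand side of the linear ODE system satisfied by the difference of frames. -/
def vODE (ε : ℝ) (c : Fin 4 → ℝ) (y : Fin 4 → R4) : Fin 4 → R4 :=
  ![c 0 • y 3, c 1 • y 2 + c 2 • y 3, c 1 • y 1 + c 3 • y 3,
    c 0 • y 0 + (-(ε * c 2)) • y 1 + (ε * c 3) • y 2]

lemma vODE_zero (ε : ℝ) (c : Fin 4 → ℝ) : vODE ε c 0 = 0 := by
  funext i; fin_cases i <;> simp [vODE]

lemma vODE_lipschitz {ε : ℝ} (hε : ε = 1 ∨ ε = -1) {c : Fin 4 → ℝ} {C : ℝ} (hC0 : 0 ≤ C)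
    (hC : ∀ i, |c i| ≤ C) :
    LipschitzWith (Real.toNNReal (3 * C)) (vODE ε c) := by
  have hε1 : |ε| = 1 := by rcases hε with rfl | rfl <;> norm_num
  apply LipschitzWith.of_dist_le_mul
  intro y z
  have hco : ((Real.toNNReal (3 * C)) : ℝ) = 3 * C := Real.coe_toNNReal _ (by positivity)
  rw [hco]
  have hd : ∀ (j k : Fin 4), dist (y j k) (z j k) ≤ dist y z := fun j k =>
    le_trans (dist_le_pi_dist (y j) (z j) k) (dist_le_pi_dist y z j)
  have hdist : (0 : ℝ) ≤ dist y z := dist_nonneg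
  rw [dist_pi_le_iff (by positivity)]
  intro i
  rw [dist_pi_le_iff (by positivity)]
  intro k
  have base : ∀ (a : ℝ) (j : Fin 4), |a| ≤ C → dist (a * y j k) (a * z j k) ≤ C * dist y z := by
    intro a j ha
    rw [Real.dist_eq, show a * y j k - a * z j k = a * (y j k - z j k) by ring, abs_mul]
    apply mul_le_mul ha ?_ (abs_nonneg _) hC0
    rw [← Real.dist_eq]; exact hd j k
  have hεm : ∀ j : Fin 4, |(-(ε * c j))| ≤ C := by
    intro j; rw [abs_neg, abs_mul, hε1, one_mul]; exact hC j
  have hεp : ∀ j : Fin 4, |ε * c j| ≤ C := by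
    intro j; rw [abs_mul, hε1, one_mul]; exact hC j
  fin_cases i
  · simp only [vODE, Fin.zero_eta, Matrix.cons_val_zero, Pi.smul_apply, smul_eq_mul]
    have := base (c 0) 3 (hC 0)
    nlinarith
  · simp only [vODE, Fin.mk_one, Matrix.cons_val_one, Matrix.head_cons, Matrix.cons_val_zero, Pi.add_apply,
      Pi.smul_apply, smul_eq_mul]
    have h1 := base (c 1) 2 (hC 1)
    have h2 := base (c 2) 3 (hC 2)
    have := dist_add_add_le (c 1 * y 2 k) (c 2 * y 3 k) (c 1 * z 2 k) (c 2 * z 3 k)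
    nlinarith
  · simp only [vODE, show (⟨2, by norm_num⟩ : Fin 4) = 2 from rfl, Matrix.cons_val_two,
      Matrix.tail_cons, Matrix.head_cons, Pi.add_apply, Pi.smul_apply, smul_eq_mul]
    have h1 := base (c 1) 1 (hC 1)
    have h2 := base (c 3) 3 (hC 3)
    have := dist_add_add_le (c 1 * y 1 k) (c 3 * y 3 k) (c 1 * z 1 k) (c 3 * z 3 k)
    nlinarith
  · simp only [vODE, show (⟨3, by norm_num⟩ : Fin 4) = 3 from rfl, Matrix.cons_val_three,
      Matrix.tail_cons, Matrix.head_cons, Pi.add_apply, Pi.smul_apply, smul_eq_mul]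
    have h1 := base (c 0) 0 (hC 0)
    have h2 := base (-(ε * c 2)) 1 (hεm 2)
    have h3 := base (ε * c 3) 2 (hεp 3)
    have t1 := dist_add_add_le (c 0 * y 0 k + -(ε * c 2) * y 1 k) (ε * c 3 * y 2 k)
      (c 0 * z 0 k + -(ε * c 2) * z 1 k) (ε * c 3 * z 2 k)
    have t2 := dist_add_add_le (c 0 * y 0 k) (-(ε * c 2) * y 1 k)
      (c 0 * z 0 k) (-(ε * c 2) * z 1 k)
    nlinarith

lemma hasDerivAt_vec4 {f0 f1 f2 f3 : ℝ → R4} {d0 d1 d2 d3 : R4} {t : ℝ}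
    (h0 : HasDerivAt f0 d0 t) (h1 : HasDerivAt f1 d1 t)
    (h2 : HasDerivAt f2 d2 t) (h3 : HasDerivAt f3 d3 t) :
    HasDerivAt (fun u => (![f0 u, f1 u, f2 u, f3 u] : Fin 4 → R4)) ![d0, d1, d2, d3] t := by
  apply hasDerivAt_pi.mpr
  intro i
  fin_cases i
  · simpa using h0
  · simpa using h1
  · simpa using h2
  · simpa using h3

end UniqAux

/-- Uniqueness of pseudo-spherical spacelike framed curves: two framed curves
with the same curvature are congruent. -/
theorem uniqueness_framed_curves
    (I : Set ℝ) (hIopen : IsOpen I) (hIconn : I.OrdConnected)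
    (γ v₁ v₂ tγ tv₁ tv₂ : ℝ → R4) (ε : ℝ)
    (h : IsFramedCurve I γ v₁ v₂ ε) (ht : IsFramedCurve I tγ tv₁ tv₂ ε)
    (hcurv : ∀ s ∈ I,
      curvA γ v₁ v₂ s = curvA tγ tv₁ tv₂ s ∧
      curvL ε v₁ v₂ s = curvL ε tv₁ tv₂ s ∧
      curvM γ v₁ v₂ s = curvM tγ tv₁ tv₂ s ∧
      curvN γ v₁ v₂ s = curvN tγ tv₁ tv₂ s) :
    ∃ A : R4 →ₗ[ℝ] R4, (∀ u w : R4, pip (A u) (A w) = pip u w) ∧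
      ∀ s ∈ I, tγ s = A (γ s) ∧ tv₁ s = A (v₁ s) ∧ tv₂ s = A (v₂ s) := by
  have heps := h.eps
  rcases Set.eq_empty_or_nonempty I with rfl | ⟨s₀, hs₀⟩
  · exact ⟨LinearMap.id, fun u w => rfl, fun s hs => absurd hs (Set.notMem_empty s)⟩
  -- the isometry mapping the frame at s₀ to the tilde frame at s₀
  obtain ⟨m03, m13, m23, m33⟩ := gram_muF h hs₀
  obtain ⟨tm03, tm13, tm23, tm33⟩ := gram_muF ht hs₀
  have h00 : pip (γ s₀) (γ s₀) = -1 := h.mem_ads s₀ hs₀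
  have t00 : pip (tγ s₀) (tγ s₀) = -1 := ht.mem_ads s₀ hs₀
  obtain ⟨A, hAiso, hA0, hA1, hA2, hA3⟩ :=
    exists_isometry heps h00 (h.orth_γv₁ s₀ hs₀) (h.orth_γv₂ s₀ hs₀) m03
      (h.norm_v₁ s₀ hs₀) (h.orth_v₁v₂ s₀ hs₀) m13 (h.norm_v₂ s₀ hs₀) m23 m33
      t00 (ht.orth_γv₁ s₀ hs₀) (ht.orth_γv₂ s₀ hs₀) tm03
      (ht.norm_v₁ s₀ hs₀) (ht.orth_v₁v₂ s₀ hs₀) tm13 (ht.norm_v₂ s₀ hs₀) tm23 tm33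
  refine ⟨A, hAiso, ?_⟩
  -- continuity of the curvature functions
  have hγder : ContinuousOn (deriv γ) I := h.smooth_γ.continuousOn_deriv_of_isOpen hIopen (by simp)
  have hv1der : ContinuousOn (deriv v₁) I :=
    h.smooth_v₁.continuousOn_deriv_of_isOpen hIopen (by simp)
  have hv2der : ContinuousOn (deriv v₂) I :=
    h.smooth_v₂.continuousOn_deriv_of_isOpen hIopen (by simp)
  have hγc : ContinuousOn γ I := h.smooth_γ.continuousOn
  have hv1c : ContinuousOn v₁ I := h.smooth_v₁.continuousOn
  have hv2c : ContinuousOn v₂ I := h.smooth_v₂.continuousOn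
  have hμc : ContinuousOn (muF γ v₁ v₂) I := by
    apply continuousOn_pi.mpr
    intro i
    fin_cases i <;> simp [muF, trip, minor3] <;> fun_prop
  have hcA : ContinuousOn (curvA γ v₁ v₂) I := by
    unfold curvA pip; fun_prop
  have hcL : ContinuousOn (curvL ε v₁ v₂) I := by
    unfold curvL pip; fun_prop
  have hcM : ContinuousOn (curvM γ v₁ v₂) I := by
    unfold curvM pip; fun_prop
  have hcN : ContinuousOn (curvN γ v₁ v₂) I := by
    unfold curvN pip; fun_prop
  have hcoefc : ContinuousOn (fun t => (![curvA γ v₁ v₂ t, curvL ε v₁ v₂ t, curvM γ v₁ v₂ t,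
      curvN γ v₁ v₂ t] : Fin 4 → ℝ)) I := by
    apply continuousOn_pi.mpr
    intro i
    fin_cases i
    · simpa using hcA
    · simpa using hcL
    · simpa using hcM
    · simpa using hcN
  -- the difference of the two frames (the tilde frame minus the image of the frame)
  set Yf : ℝ → Fin 4 → R4 := fun t =>
    ![tγ t - A (γ t), tv₁ t - A (v₁ t), tv₂ t - A (v₂ t),
      muF tγ tv₁ tv₂ t - A (muF γ v₁ v₂ t)] with hYf
  have hY0 : Yf s₀ = 0 := by
    funext i
    fin_cases i <;> simp [hYf, hA0, hA1, hA2, hA3]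
  have hAder : ∀ (f : ℝ → R4) (f' : R4) (t : ℝ), HasDerivAt f f' t →
      HasDerivAt (fun u => A (f u)) (A f') t := by
    intro f f' t hf
    have := ((LinearMap.toContinuousLinearMap A).hasFDerivAt (x := f t)).comp_hasDerivAt t hf
    exact this
  have hYder : ∀ t ∈ I, HasDerivAt Yf
      (vODE ε ![curvA γ v₁ v₂ t, curvL ε v₁ v₂ t, curvM γ v₁ v₂ t, curvN γ v₁ v₂ t] (Yf t)) t := by
    intro t htI
    obtain ⟨Hγ, Hv1, Hv2, Hμ⟩ := frenet hIopen h htI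
    obtain ⟨tHγ, tHv1, tHv2, tHμ⟩ := frenet hIopen ht htI
    obtain ⟨e1, e2, e3, e4⟩ := hcurv t htI
    rw [← e1] at tHγ tHμ
    rw [← e2] at tHv1 tHv2
    rw [← e3] at tHv1 tHμ
    rw [← e4] at tHv2 tHμ
    have c0 : HasDerivAt (fun u => tγ u - A (γ u))
        (curvA γ v₁ v₂ t • (muF tγ tv₁ tv₂ t - A (muF γ v₁ v₂ t))) t := by
      have hder := tHγ.sub (hAder γ _ t Hγ)
      convert hder using 1
      · rfl
      · rfl
      · rfl
      · rfl
      rw [map_smul]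
      module
    have c1 : HasDerivAt (fun u => tv₁ u - A (v₁ u))
        (curvL ε v₁ v₂ t • (tv₂ t - A (v₂ t))
          + curvM γ v₁ v₂ t • (muF tγ tv₁ tv₂ t - A (muF γ v₁ v₂ t))) t := by
      have hder := tHv1.sub (hAder v₁ _ t Hv1)
      convert hder using 1
      · rfl
      · rfl
      · rfl
      · rfl
      rw [map_add, map_smul, map_smul]
      module
    have c2 : HasDerivAt (fun u => tv₂ u - A (v₂ u))
        (curvL ε v₁ v₂ t • (tv₁ t - A (v₁ t))
          + curvN γ v₁ v₂ t • (muF tγ tv₁ tv₂ t - A (muF γ v₁ v₂ t))) t := by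
      have hder := tHv2.sub (hAder v₂ _ t Hv2)
      convert hder using 1
      · rfl
      · rfl
      · rfl
      · rfl
      rw [map_add, map_smul, map_smul]
      module
    have c3 : HasDerivAt (fun u => muF tγ tv₁ tv₂ u - A (muF γ v₁ v₂ u))
        (curvA γ v₁ v₂ t • (tγ t - A (γ t))
          + (-(ε * curvM γ v₁ v₂ t)) • (tv₁ t - A (v₁ t))
          + (ε * curvN γ v₁ v₂ t) • (tv₂ t - A (v₂ t))) t := by
      have hder := tHμ.sub (hAder (muF γ v₁ v₂) _ t Hμ)
      convert hder using 1
      · rfl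
      · rfl
      · rfl
      · rfl
      rw [map_add, map_add, map_smul, map_smul, map_smul]
      module
    have hvec := hasDerivAt_vec4 c0 c1 c2 c3
    rw [hYf]
    exact hvec
  have key : ∀ s₁ ∈ I, Yf s₁ = 0 := by
    intro s₁ hs₁
    rcases le_total s₀ s₁ with hle | hle
    · -- forward in time
      have hsub : Set.Icc s₀ s₁ ⊆ I := hIconn.out hs₀ hs₁
      obtain ⟨C, hC⟩ := isCompact_Icc.exists_bound_of_continuousOn (hcoefc.mono hsub)
      set C' := max C 0 with hC'
      have hC'0 : (0 : ℝ) ≤ C' := le_max_right _ _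
      have hbound : ∀ t ∈ Set.Icc s₀ s₁, ∀ i, |(![curvA γ v₁ v₂ t, curvL ε v₁ v₂ t,
          curvM γ v₁ v₂ t, curvN γ v₁ v₂ t] : Fin 4 → ℝ) i| ≤ C' := by
        intro t htt i
        have h1 : |(![curvA γ v₁ v₂ t, curvL ε v₁ v₂ t, curvM γ v₁ v₂ t,
            curvN γ v₁ v₂ t] : Fin 4 → ℝ) i| = ‖(![curvA γ v₁ v₂ t, curvL ε v₁ v₂ t,
            curvM γ v₁ v₂ t, curvN γ v₁ v₂ t] : Fin 4 → ℝ) i‖ := rfl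
        rw [h1]
        exact le_trans (le_trans (norm_le_pi_norm _ i) (hC t htt)) (le_max_left _ _)
      set cl : ℝ → ℝ := fun t => max s₀ (min t s₁) with hcl
      have hclmem : ∀ t, cl t ∈ Set.Icc s₀ s₁ := fun t =>
        ⟨le_max_left _ _, max_le hle (min_le_right _ _)⟩
      have hcleq : ∀ t ∈ Set.Icc s₀ s₁, cl t = t := by
        intro t htt
        rw [hcl]
        simp only
        rw [min_eq_left htt.2, max_eq_right htt.1]
      set vv : ℝ → (Fin 4 → R4) → (Fin 4 → R4) := fun t =>
        vODE ε ![curvA γ v₁ v₂ (cl t), curvL ε v₁ v₂ (cl t), curvM γ v₁ v₂ (cl t),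
          curvN γ v₁ v₂ (cl t)] with hvv
      have hlip : ∀ t, LipschitzWith (Real.toNNReal (3 * C')) (vv t) := fun t =>
        vODE_lipschitz heps hC'0 (hbound (cl t) (hclmem t))
      have heqOn : Set.EqOn Yf (fun _ => (0 : Fin 4 → R4)) (Set.Icc s₀ s₁) := by
        apply ODE_solution_unique hlip
        · intro t htt
          exact (hYder t (hsub htt)).continuousAt.continuousWithinAt
        · intro t htt
          have h1 := hYder t (hsub (Set.Ico_subset_Icc_self htt))
          have h2 : vv t (Yf t) = vODE ε ![curvA γ v₁ v₂ t, curvL ε v₁ v₂ t, curvM γ v₁ v₂ t,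
              curvN γ v₁ v₂ t] (Yf t) := by
            rw [hvv]
            simp only
            rw [hcleq t (Set.Ico_subset_Icc_self htt)]
          rw [h2]
          exact h1.hasDerivWithinAt
        · exact continuousOn_const
        · intro t htt
          have h2 : vv t ((fun _ => (0 : Fin 4 → R4)) t) = 0 := by
            rw [hvv]; exact vODE_zero _ _
          rw [h2]
          exact (hasDerivAt_const t (0 : Fin 4 → R4)).hasDerivWithinAt
        · exact hY0
      exact heqOn ⟨hle, le_refl s₁⟩
    · -- backward in time
      have hsub : Set.Icc s₁ s₀ ⊆ I := hIconn.out hs₁ hs₀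
      obtain ⟨C, hC⟩ := isCompact_Icc.exists_bound_of_continuousOn (hcoefc.mono hsub)
      set C' := max C 0 with hC'
      have hC'0 : (0 : ℝ) ≤ C' := le_max_right _ _
      have hbound : ∀ t ∈ Set.Icc s₁ s₀, ∀ i, |(![curvA γ v₁ v₂ t, curvL ε v₁ v₂ t,
          curvM γ v₁ v₂ t, curvN γ v₁ v₂ t] : Fin 4 → ℝ) i| ≤ C' := by
        intro t htt i
        have h1 : |(![curvA γ v₁ v₂ t, curvL ε v₁ v₂ t, curvM γ v₁ v₂ t,
            curvN γ v₁ v₂ t] : Fin 4 → ℝ) i| = ‖(![curvA γ v₁ v₂ t, curvL ε v₁ v₂ t,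
            curvM γ v₁ v₂ t, curvN γ v₁ v₂ t] : Fin 4 → ℝ) i‖ := rfl
        rw [h1]
        exact le_trans (le_trans (norm_le_pi_norm _ i) (hC t htt)) (le_max_left _ _)
      set cl : ℝ → ℝ := fun t => max s₁ (min t s₀) with hcl
      have hclmem : ∀ t, cl t ∈ Set.Icc s₁ s₀ := fun t =>
        ⟨le_max_left _ _, max_le hle (min_le_right _ _)⟩
      have hcleq : ∀ t ∈ Set.Icc s₁ s₀, cl t = t := by
        intro t htt
        rw [hcl]
        simp only
        rw [min_eq_left htt.2, max_eq_right htt.1]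
      set vv : ℝ → (Fin 4 → R4) → (Fin 4 → R4) := fun t =>
        vODE ε ![curvA γ v₁ v₂ (cl t), curvL ε v₁ v₂ (cl t), curvM γ v₁ v₂ (cl t),
          curvN γ v₁ v₂ (cl t)] with hvv
      have hlip : ∀ t, LipschitzWith (Real.toNNReal (3 * C')) (vv t) := fun t =>
        vODE_lipschitz heps hC'0 (hbound (cl t) (hclmem t))
      have heqOn : Set.EqOn Yf (fun _ => (0 : Fin 4 → R4)) (Set.Icc s₁ s₀) := by
        apply ODE_solution_unique_of_mem_Icc_left (s := fun _ => (Set.univ : Set (Fin 4 → R4)))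
          (fun t _ => (hlip t).lipschitzOnWith)
        · intro t htt
          exact (hYder t (hsub htt)).continuousAt.continuousWithinAt
        · intro t htt
          have h1 := hYder t (hsub (Set.Ioc_subset_Icc_self htt))
          have h2 : vv t (Yf t) = vODE ε ![curvA γ v₁ v₂ t, curvL ε v₁ v₂ t, curvM γ v₁ v₂ t,
              curvN γ v₁ v₂ t] (Yf t) := by
            rw [hvv]
            simp only
            rw [hcleq t (Set.Ioc_subset_Icc_self htt)]
          rw [h2]
          exact h1.hasDerivWithinAt
        · exact fun t _ => Set.mem_univ _
        · exact continuousOn_const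
        · intro t htt
          have h2 : vv t ((fun _ => (0 : Fin 4 → R4)) t) = 0 := by
            rw [hvv]; exact vODE_zero _ _
          rw [h2]
          exact (hasDerivAt_const t (0 : Fin 4 → R4)).hasDerivWithinAt
        · exact fun t _ => Set.mem_univ _
        · exact hY0
      exact heqOn ⟨le_refl s₁, hle⟩
  intro s hs
  have hk := key s hs
  have k0 := congrFun hk 0
  have k1 := congrFun hk 1
  have k2 := congrFun hk 2
  simp only [hYf, Matrix.cons_val_zero, Matrix.cons_val_one, Matrix.head_cons,
    Matrix.cons_val_two, Matrix.tail_cons, Pi.zero_apply, sub_eq_zero] at k0 k1 k2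
  exact ⟨k0, k1, k2⟩
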